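/- arXiv:2405.19261 — 7 statements merged into one kernel-verified Lean document; each statement's English description precedes it below -/
import Mathlib

section
/- Let q, p : V → ℝ be nonnegative functions, let α ∈ [0,1), and let β ≥ 1−α (in particular β > 0). Fix x ∈ V with q(x) > 0 and define π(x) = max{ min{ q(x), p(x)/(1−α) }, p(x)/β }. Then the acceptance probability satisfies min{ 1, π(x)/q(x) } = min{ 1, p(x)/((1−α)·q(x)) }; that is, speculative sampling with target distribution value π(x) accepts a draft token x with exactly the acceptance probability of lossy speculative sampling with parameters α and β. -/
/-- **Lossy speculative sampling acceptance probability** (part of Lemma 2).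
With target value `π(x) = max{min{q(x), p(x)/(1−α)}, p(x)/β}`, the acceptance
probability `min{1, π(x)/q(x)}` of generalized speculative sampling equals the
acceptance probability `min{1, p(x)/((1−α)·q(x))}` of lossy speculative
sampling with parameters `α` and `β`. -/
theorem lossy_spec_sampling_acceptance
    {V : Type*} [Fintype V] [Nonempty V]
    (q p : V → ℝ)
    (hq0 : ∀ v, 0 ≤ q v) (hp0 : ∀ v, 0 ≤ p v)
    (α β : ℝ) (hα0 : 0 ≤ α) (hα1 : α < 1) (hβ : 1 - α ≤ β) (hβ0 : 0 < β)
    (x : V) (hqx : 0 < q x)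
    (πx : ℝ)
    (hπx : πx = max (min (q x) (p x / (1 - α))) (p x / β)) :
    min 1 (πx / q x) = min 1 (p x / ((1 - α) * q x)) := by
  have ha : 0 < 1 - α := by linarith
  have key : p x / ((1 - α) * q x) = (p x / (1 - α)) / q x := by
    field_simp
  rcases le_or_gt (q x) (p x / (1 - α)) with h | h
  · -- π x ≥ q x, both sides = 1
    have hπ : q x ≤ πx := by
      rw [hπx]; exact le_max_of_le_left (le_min le_rfl h)
    have h1 : (1:ℝ) ≤ πx / q x := (one_le_div hqx).mpr hπ
    have h2 : (1:ℝ) ≤ p x / ((1 - α) * q x) := by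
      rw [key]; exact (one_le_div hqx).mpr h
    rw [min_eq_left h1, min_eq_left h2]
  · have hmin : min (q x) (p x / (1 - α)) = p x / (1 - α) := min_eq_right h.le
    have hb : p x / β ≤ p x / (1 - α) := div_le_div_of_nonneg_left (hp0 x) ha hβ
    have : πx = p x / (1 - α) := by rw [hπx, hmin, max_eq_left hb]
    rw [this, key]
end

section
/- Let q, p : V → ℝ be nonnegative functions, let α ∈ [0,1), and let β ≥ 1−α (in particular β > 0). Fix x ∈ V and define π(x) = max{ min{ q(x), p(x)/(1−α) }, p(x)/β }. Then the unnormalized residual masses agree: max{ 0, π(x) − q(x) } = max{ 0, p(x)/β − q(x) }. Consequently, the residual distribution norm(max{0, π(·) − q(·)}) of generalized speculative sampling with target π equals the residual distribution norm(max{0, p(·)/β − q(·)}) of lossy speculative sampling with parameters α and β, whenever either is well defined. -/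
/-- **Lossy speculative sampling residual distribution** (part of Lemma 2).
With target `π(v) = max{min{q(v), p(v)/(1−α)}, p(v)/β}`, the unnormalized
residual masses agree pointwise:
`max{0, π(x) − q(x)} = max{0, p(x)/β − q(x)}`, and consequently the normalized
residual distributions of generalized speculative sampling with target `π`
and of lossy speculative sampling with parameters `α, β` coincide whenever
either is well defined. -/
theorem lossy_spec_sampling_residual
    {V : Type*} [Fintype V] [Nonempty V]
    (q p : V → ℝ)
    (hq0 : ∀ v, 0 ≤ q v) (hp0 : ∀ v, 0 ≤ p v)
    (α β : ℝ) (hα0 : 0 ≤ α) (hα1 : α < 1) (hβ : 1 - α ≤ β) (hβ0 : 0 < β)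
    (π : V → ℝ)
    (hπ : ∀ v, π v = max (min (q v) (p v / (1 - α))) (p v / β)) :
    (∀ x, max 0 (π x - q x) = max 0 (p x / β - q x)) ∧
    ((0 < ∑ v, max 0 (π v - q v) ∨ 0 < ∑ v, max 0 (p v / β - q v)) →
      ∀ x, max 0 (π x - q x) / (∑ v, max 0 (π v - q v))
        = max 0 (p x / β - q x) / (∑ v, max 0 (p v / β - q v))) := by
  have key : ∀ x, max 0 (π x - q x) = max 0 (p x / β - q x) := by
    intro x
    rw [hπ x]
    rcases le_or_gt (p x / β) (q x) with h | h
    · have h1 : min (q x) (p x / (1 - α)) ≤ q x := min_le_left _ _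
      rw [max_eq_left (by linarith [max_le h1 h] : max (min (q x) (p x / (1 - α))) (p x / β) - q x ≤ 0),
        max_eq_left (by linarith : p x / β - q x ≤ 0)]
    · have : min (q x) (p x / (1 - α)) ≤ p x / β := le_of_lt (lt_of_le_of_lt (min_le_left _ _) h)
      rw [max_eq_right this]
  refine ⟨key, fun _ x => by rw [key x]; congr 1; exact Finset.sum_congr rfl fun v _ => key v⟩
end

section
/- Let V be a finite nonempty vocabulary and let q, π be probability distributions on V with q(v) > 0 for all v ∈ V. Then the probability that a draft token drawn from q is rejected in speculative verification against target π satisfies ∑_{v∈V} q(v)·(1 − min{1, π(v)/q(v)}) = ∑_{v∈V} max{0, π(v) − q(v)}, i.e., the rejection probability equals the total variation distance D_TV(π, q). -/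
/-- **Rejection probability equals total variation distance.**
For probability distributions `q, π` on a finite vocabulary with `q > 0`
everywhere, the probability that a draft token drawn from `q` is rejected in
speculative verification against target `π` equals
`D_TV(π, q) = ∑ v, max{0, π(v) − q(v)}`. -/
theorem rejection_prob_eq_tv
    {V : Type*} [Fintype V] [Nonempty V]
    (q π : V → ℝ)
    (hq0 : ∀ v, 0 ≤ q v) (hq1 : ∑ v, q v = 1)
    (hπ0 : ∀ v, 0 ≤ π v) (hπ1 : ∑ v, π v = 1)
    (hqpos : ∀ v, 0 < q v) :
    ∑ v, q v * (1 - min 1 (π v / q v)) = ∑ v, max 0 (π v - q v) := by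
  have h1 : ∀ v, q v * (1 - min 1 (π v / q v)) = max 0 (q v - π v) := by
    intro v
    rcases le_or_gt (q v) (π v) with h | h
    · rw [min_eq_left (by rw [le_div_iff₀ (hqpos v)]; linarith), max_eq_left (by linarith)]
      ring
    · rw [min_eq_right (by rw [div_le_one (hqpos v)]; linarith), max_eq_right (by linarith)]
      rw [mul_sub, mul_one, mul_div_cancel₀ _ (hqpos v).ne']
  have h2 : ∀ v, max 0 (q v - π v) - max 0 (π v - q v) = q v - π v := by
    intro v
    rcases le_total (q v) (π v) with h | h
    · rw [max_eq_left (by linarith), max_eq_right (by linarith)]; ring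
    · rw [max_eq_right (by linarith), max_eq_left (by linarith)]; ring
  simp only [h1]
  have : ∑ v, (max 0 (q v - π v) - max 0 (π v - q v)) = 0 := by
    simp only [h2, Finset.sum_sub_distrib, hq1, hπ1]; ring
  rw [Finset.sum_sub_distrib] at this
  linarith
end

section
/- Let V be a finite nonempty vocabulary, let q, p be probability distributions on V, let r ∈ {0,1}, and define the target distribution π = (1−r)·q + r·p. Then ∑_{v∈V} max{0, q(v) − π(v)} = r · D_TV(p, q), i.e., the probability that a token drawn from the draft distribution q is rejected during speculative verification against π equals r · D_TV(p, q). -/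
/-- **Lemma 3 (token rejection rate for cascade target distributions).**
For probability distributions `q, p` on a finite vocabulary, `r ∈ {0,1}`, and
target distribution `π = (1−r)·q + r·p`, the probability that a token drawn
from the draft distribution `q` is rejected during speculative verification,
`∑ v, max{0, q(v) − π(v)}`, equals `r · D_TV(p, q)`. -/
theorem rejection_rate_cascade_target
    {V : Type*} [Fintype V] [Nonempty V]
    (q p : V → ℝ)
    (hq0 : ∀ v, 0 ≤ q v) (hq1 : ∑ v, q v = 1)
    (hp0 : ∀ v, 0 ≤ p v) (hp1 : ∑ v, p v = 1)
    (r : ℝ) (hr : r ∈ ({0, 1} : Set ℝ))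
    (π : V → ℝ) (hπ : ∀ v, π v = (1 - r) * q v + r * p v) :
    ∑ v, max 0 (q v - π v) = r * ∑ v, max 0 (p v - q v) := by
  rcases hr with hr | hr
  · subst hr
    simp only [hπ]
    simp
  · simp only [Set.mem_singleton_iff] at hr
    subst hr
    simp only [hπ]
    have key : ∑ v, max 0 (q v - p v) - ∑ v, max 0 (p v - q v) = 0 := by
      rw [← Finset.sum_sub_distrib]
      have : ∀ v : V, max 0 (q v - p v) - max 0 (p v - q v) = q v - p v := by
        intro v
        rcases le_total (q v) (p v) with h | h
        · rw [max_eq_left (by linarith), max_eq_right (by linarith)]; ring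
        · rw [max_eq_right (by linarith), max_eq_left (by linarith)]; ring
      rw [Finset.sum_congr rfl fun v _ => this v, Finset.sum_sub_distrib, hq1, hp1]
      ring
    have : ∑ v, max 0 (q v - p v) = ∑ v, max 0 (p v - q v) := by linarith
    simpa using this
end

section
/- Let V be a finite nonempty vocabulary, let P, q, p be probability distributions on V, and let α ≥ 0. Fix maximizers v_q of q and v_p of p, and define the 0-1 losses ℓ(v,q) = 1(v ≠ v_q) and ℓ(v,p) = 1(v ≠ v_p). For r ∈ {0,1} let L_spec(r) = (1−r)·∑_{v∈V} P(v)·ℓ(v,q) + r·(∑_{v∈V} P(v)·ℓ(v,p) + α·D_TV(p,q)). Define the plug-in rule r̂_OPT = 1 if max_{v} q(v) < max_{v} p(v) − α·D_TV(p,q) and r̂_OPT = 0 otherwise. Then L_spec(r̂_OPT) − min_{r∈{0,1}} L_spec(r) ≤ max_{v∈V} |P(v) − q(v)| + max_{v∈V} |P(v) − p(v)|. -/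
/-- **Lemma 5 (regret bound for the plug-in rule `r̂_OPT`, 0-1 loss).**
With 0-1 losses relative to fixed maximizers `vq` of `q` and `vp` of `p`, the
plug-in rule `r̂_OPT = 1` iff `max_v q(v) < max_v p(v) − α·D_TV(p,q)` satisfies
`L_spec(r̂_OPT) − min_{r∈{0,1}} L_spec(r)
  ≤ max_v |P(v) − q(v)| + max_v |P(v) − p(v)|`. -/
theorem regret_bound_opt_zero_one
    {V : Type*} [Fintype V] [Nonempty V] [DecidableEq V]
    (P q p : V → ℝ)
    (hP0 : ∀ v, 0 ≤ P v) (hP1 : ∑ v, P v = 1)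
    (hq0 : ∀ v, 0 ≤ q v) (hq1 : ∑ v, q v = 1)
    (hp0 : ∀ v, 0 ≤ p v) (hp1 : ∑ v, p v = 1)
    (α : ℝ) (hα : 0 ≤ α)
    (vq : V) (hvq : ∀ v, q v ≤ q vq)
    (vp : V) (hvp : ∀ v, p v ≤ p vp)
    (Lspec : ℝ → ℝ)
    (hLspec : ∀ r : ℝ,
      Lspec r = (1 - r) * (∑ v, P v * (if v = vq then (0 : ℝ) else 1))
        + r * ((∑ v, P v * (if v = vp then (0 : ℝ) else 1))
            + α * ∑ v, max 0 (p v - q v)))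
    (rhat : ℝ)
    (hrhat : rhat =
      if q vq < p vp - α * ∑ v, max 0 (p v - q v) then 1 else 0) :
    Lspec rhat - min (Lspec 0) (Lspec 1)
      ≤ (Finset.univ.sup' Finset.univ_nonempty fun v => |P v - q v|)
        + (Finset.univ.sup' Finset.univ_nonempty fun v => |P v - p v|) := by
  set D := α * ∑ v, max 0 (p v - q v) with hD
  have hsum : ∀ (w : V), (∑ v, P v * (if v = w then (0:ℝ) else 1)) = 1 - P w := by
    intro w
    have h : ∀ v ∈ Finset.univ, P v * (if v = w then (0:ℝ) else 1)
        = P v - (if v = w then P v else 0) := by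
      intro v _; by_cases h : v = w <;> simp [h]
    rw [Finset.sum_congr rfl h, Finset.sum_sub_distrib,
      Finset.sum_ite_eq' Finset.univ w P, hP1]
    simp
  have hL0 : Lspec 0 = 1 - P vq := by rw [hLspec 0, hsum vq, hsum vp]; ring
  have hL1 : Lspec 1 = (1 - P vp) + D := by rw [hLspec 1, hsum vq, hsum vp]; ring
  have hAq : |P vq - q vq| ≤ Finset.univ.sup' Finset.univ_nonempty fun v => |P v - q v| :=
    Finset.le_sup' (fun v => |P v - q v|) (Finset.mem_univ vq)
  have hAp : |P vp - p vp| ≤ Finset.univ.sup' Finset.univ_nonempty fun v => |P v - p v| :=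
    Finset.le_sup' (fun v => |P v - p v|) (Finset.mem_univ vp)
  have habs1 : P vq - q vq ≤ |P vq - q vq| := le_abs_self _
  have habs2 : q vq - P vq ≤ |P vq - q vq| := by
    rw [abs_sub_comm]; exact le_abs_self _
  have habs3 : p vp - P vp ≤ |P vp - p vp| := by
    rw [abs_sub_comm]; exact le_abs_self _
  have habs4 : P vp - p vp ≤ |P vp - p vp| := le_abs_self _
  have hnn1 : (0:ℝ) ≤ |P vq - q vq| := abs_nonneg _
  have hnn2 : (0:ℝ) ≤ |P vp - p vp| := abs_nonneg _
  rw [hrhat]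
  by_cases h : q vq < p vp - D
  · rw [if_pos h]
    rcases le_total (Lspec 0) (Lspec 1) with hm | hm
    · rw [min_eq_left hm, hL0, hL1]; linarith
    · rw [min_eq_right hm]; linarith
  · rw [if_neg h]
    push_neg at h
    rcases le_total (Lspec 0) (Lspec 1) with hm | hm
    · rw [min_eq_left hm]; linarith
    · rw [min_eq_right hm, hL0, hL1]; linarith
end

section
/- Let V be a finite nonempty vocabulary, let P, q, p be probability distributions on V with q(v) > 0 and p(v) > 0 for all v ∈ V, and let α ≥ 0. Suppose |log q(v)| ≤ B_q and |log p(v)| ≤ B_p for all v ∈ V, for some B_q, B_p > 0. Define the log losses ℓ(v,q) = −log q(v) and ℓ(v,p) = −log p(v), and for r ∈ {0,1} let L_spec(r) = (1−r)·∑_{v∈V} P(v)·ℓ(v,q) + r·(∑_{v∈V} P(v)·ℓ(v,p) + α·D_TV(p,q)). Define the plug-in rule r̂_OPTLog = 1 if ∑_{v∈V} q(v)·log q(v) < ∑_{v∈V} p(v)·log p(v) − α·D_TV(p,q) and r̂_OPTLog = 0 otherwise. Then L_spec(r̂_OPTLog) − min_{r∈{0,1}} L_spec(r) ≤ B_q·∑_{v∈V}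 |P(v) − q(v)| + B_p·∑_{v∈V} |P(v) − p(v)|. -/
/-- **Lemma 8 (regret bound for the plug-in rule `r̂_OPTLog`, log loss).**
With log losses `ℓ(v,s) = −log s(v)`, bounded log probabilities
`|log q(v)| ≤ B_q`, `|log p(v)| ≤ B_p`, the entropy plug-in rule
`r̂_OPTLog = 1` iff `∑ v, q(v)·log q(v) < ∑ v, p(v)·log p(v) − α·D_TV(p,q)`
satisfies `L_spec(r̂_OPTLog) − min_{r∈{0,1}} L_spec(r)
  ≤ B_q·∑ v |P(v) − q(v)| + B_p·∑ v |P(v) − p(v)|`. -/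
theorem regret_bound_opt_log
    {V : Type*} [Fintype V] [Nonempty V]
    (P q p : V → ℝ)
    (hP0 : ∀ v, 0 ≤ P v) (hP1 : ∑ v, P v = 1)
    (hq0 : ∀ v, 0 < q v) (hq1 : ∑ v, q v = 1)
    (hp0 : ∀ v, 0 < p v) (hp1 : ∑ v, p v = 1)
    (α : ℝ) (hα : 0 ≤ α)
    (Bq Bp : ℝ) (hBq : 0 < Bq) (hBp : 0 < Bp)
    (hqB : ∀ v, |Real.log (q v)| ≤ Bq)
    (hpB : ∀ v, |Real.log (p v)| ≤ Bp)
    (Lspec : ℝ → ℝ)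
    (hLspec : ∀ r : ℝ,
      Lspec r = (1 - r) * (∑ v, P v * (-Real.log (q v)))
        + r * ((∑ v, P v * (-Real.log (p v)))
            + α * ∑ v, max 0 (p v - q v)))
    (rhat : ℝ)
    (hrhat : rhat =
      if (∑ v, q v * Real.log (q v))
          < (∑ v, p v * Real.log (p v)) - α * ∑ v, max 0 (p v - q v)
        then 1 else 0) :
    Lspec rhat - min (Lspec 0) (Lspec 1)
      ≤ Bq * (∑ v, |P v - q v|) + Bp * (∑ v, |P v - p v|) := by

  have hDq : |(∑ v, P v * (-Real.log (q v))) + ∑ v, q v * Real.log (q v)|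
      ≤ Bq * ∑ v, |P v - q v| := by
    have hEq : (∑ v, P v * (-Real.log (q v))) + ∑ v, q v * Real.log (q v)
        = ∑ v, (P v - q v) * (-Real.log (q v)) := by
      rw [← Finset.sum_add_distrib]
      exact Finset.sum_congr rfl fun v _ => by ring
    rw [hEq]
    calc |∑ v, (P v - q v) * (-Real.log (q v))|
        ≤ ∑ v, |(P v - q v) * (-Real.log (q v))| := Finset.abs_sum_le_sum_abs _ _
      _ ≤ ∑ v, |P v - q v| * Bq := by
          refine Finset.sum_le_sum fun v _ => ?_
          rw [abs_mul, abs_neg]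
          exact mul_le_mul_of_nonneg_left (hqB v) (abs_nonneg _)
      _ = Bq * ∑ v, |P v - q v| := by rw [← Finset.sum_mul, mul_comm]
  have hDp : |(∑ v, P v * (-Real.log (p v))) + ∑ v, p v * Real.log (p v)|
      ≤ Bp * ∑ v, |P v - p v| := by
    have hEq : (∑ v, P v * (-Real.log (p v))) + ∑ v, p v * Real.log (p v)
        = ∑ v, (P v - p v) * (-Real.log (p v)) := by
      rw [← Finset.sum_add_distrib]
      exact Finset.sum_congr rfl fun v _ => by ring
    rw [hEq]
    calc |∑ v, (P v - p v) * (-Real.log (p v))|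
        ≤ ∑ v, |(P v - p v) * (-Real.log (p v))| := Finset.abs_sum_le_sum_abs _ _
      _ ≤ ∑ v, |P v - p v| * Bp := by
          refine Finset.sum_le_sum fun v _ => ?_
          rw [abs_mul, abs_neg]
          exact mul_le_mul_of_nonneg_left (hpB v) (abs_nonneg _)
      _ = Bp * ∑ v, |P v - p v| := by rw [← Finset.sum_mul, mul_comm]
  have h0 : Lspec 0 = ∑ v, P v * (-Real.log (q v)) := by rw [hLspec]; ring
  have h1 : Lspec 1 = (∑ v, P v * (-Real.log (p v)))
      + α * ∑ v, max 0 (p v - q v) := by rw [hLspec]; ring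
  have habs1 := le_abs_self ((∑ v, P v * (-Real.log (q v))) + ∑ v, q v * Real.log (q v))
  have habs2 := neg_abs_le ((∑ v, P v * (-Real.log (q v))) + ∑ v, q v * Real.log (q v))
  have habs3 := le_abs_self ((∑ v, P v * (-Real.log (p v))) + ∑ v, p v * Real.log (p v))
  have habs4 := neg_abs_le ((∑ v, P v * (-Real.log (p v))) + ∑ v, p v * Real.log (p v))
  by_cases h : (∑ v, q v * Real.log (q v))
      < (∑ v, p v * Real.log (p v)) - α * ∑ v, max 0 (p v - q v)
  · have hr : rhat = 1 := by rw [hrhat, if_pos h]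
    rw [hr]
    rcases min_le_iff.mp (le_refl (min (Lspec 0) (Lspec 1))) with _ | _
    all_goals
      have hm1 : min (Lspec 0) (Lspec 1) ≤ Lspec 0 := min_le_left _ _
      have hm2 : min (Lspec 0) (Lspec 1) ≤ Lspec 1 := min_le_right _ _
      rcases le_total (Lspec 1) (Lspec 0) with hc | hc
      · have : min (Lspec 0) (Lspec 1) = Lspec 1 := min_eq_right hc
        rw [this]
        have h5 : (0:ℝ) ≤ Bq * ∑ v, |P v - q v| :=
          le_trans (abs_nonneg _) hDq
        have h6 : (0:ℝ) ≤ Bp * ∑ v, |P v - p v| :=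
          le_trans (abs_nonneg _) hDp
        linarith
      · have : min (Lspec 0) (Lspec 1) = Lspec 0 := min_eq_left hc
        rw [this, h0, h1]
        linarith
  · have hr : rhat = 0 := by rw [hrhat, if_neg h]
    push_neg at h
    rw [hr]
    rcases le_total (Lspec 0) (Lspec 1) with hc | hc
    · have : min (Lspec 0) (Lspec 1) = Lspec 0 := min_eq_left hc
      rw [this]
      have h5 : (0:ℝ) ≤ Bq * ∑ v, |P v - q v| := le_trans (abs_nonneg _) hDq
      have h6 : (0:ℝ) ≤ Bp * ∑ v, |P v - p v| := le_trans (abs_nonneg _) hDp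
      linarith
    · have : min (Lspec 0) (Lspec 1) = Lspec 1 := min_eq_right hc
      rw [this, h0, h1]
      linarith
end

section
/- Let V be a finite nonempty vocabulary, let q, p be probability distributions on V each with a unique maximizer, let a = argmax_v q(v) and b = argmax_v p(v), and let q̃ and p̃ be the one-hot distributions concentrated at a and b respectively. Let α > 0, and define δ_OPT = 1 if max_v q(v) < max_v p(v) − α·D_TV(p̃, q̃) (and 0 otherwise), and δ_Diff = 1 if max_v q(v) < max_v p(v) − α (and 0 otherwise). Then the two target distributions coincide: (1 − δ_OPT)·q̃ + δ_OPT·p̃ = (1 − δ_Diff)·q̃ + δ_Diff·p̃. Hence under greedy decoding, running the speculative cascade with the OPT deferral rule and drafter q̃ is equivalent to running it with the Diff deferral rule. -/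
/-- **Lemma 9 (greedy decoding: OPT coincides with Diff).**
Let `q, p` have unique maximizers `a, b` and let `q̃, p̃` be the one-hot
distributions at `a, b`. With `δ_OPT = 1` iff
`max_v q(v) < max_v p(v) − α·D_TV(p̃,q̃)` and `δ_Diff = 1` iff
`max_v q(v) < max_v p(v) − α`, the two target distributions coincide:
`(1−δ_OPT)·q̃ + δ_OPT·p̃ = (1−δ_Diff)·q̃ + δ_Diff·p̃`. -/
theorem greedy_opt_eq_diff
    {V : Type*} [Fintype V] [Nonempty V] [DecidableEq V]
    (q p : V → ℝ)
    (hq0 : ∀ v, 0 ≤ q v) (hq1 : ∑ v, q v = 1)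
    (hp0 : ∀ v, 0 ≤ p v) (hp1 : ∑ v, p v = 1)
    (a : V) (ha : ∀ v, q v ≤ q a) (ha' : ∀ v, q v = q a → v = a)
    (b : V) (hb : ∀ v, p v ≤ p b) (hb' : ∀ v, p v = p b → v = b)
    (qt pt : V → ℝ)
    (hqt : ∀ v, qt v = if v = a then (1 : ℝ) else 0)
    (hpt : ∀ v, pt v = if v = b then (1 : ℝ) else 0)
    (α : ℝ) (hα : 0 < α)
    (δOPT δDiff : ℝ)
    (hδOPT : δOPT =
      if q a < p b - α * ∑ v, max 0 (pt v - qt v) then 1 else 0)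
    (hδDiff : δDiff = if q a < p b - α then 1 else 0) :
    ∀ v, (1 - δOPT) * qt v + δOPT * pt v
        = (1 - δDiff) * qt v + δDiff * pt v := by
  by_cases hab : a = b
  · intro v
    have : qt v = pt v := by rw [hqt, hpt, hab]
    rw [this]; ring
  · have hsum : ∑ v, max 0 (pt v - qt v) = 1 := by
      have : ∀ v, max 0 (pt v - qt v) = if v = b then (1 : ℝ) else 0 := by
        intro v
        rw [hqt, hpt]
        by_cases h1 : v = b
        · simp [h1, Ne.symm hab]
        · by_cases h2 : v = a <;> simp [h1, h2, hab]
      rw [Finset.sum_congr rfl fun v _ => this v]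
      simp
    rw [hsum] at hδOPT
    rw [mul_one] at hδOPT
    rw [hδOPT, hδDiff]
    intro v; rfl
end
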